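/- arXiv:2504.12543 — 2 statements merged into one kernel-verified Lean document; each statement's English description precedes it below -/
import Mathlib

section
/- Let X_f(u,v) = e^{f(u,v)}·[[u²+v², u+iv],[u-iv, 1]] for a smooth f : U → R on an open set U ⊆ R². Then the mean curvature of X_f in Q^3_+ equals H = (1/2)e^{-2f}(f_uu + f_vv). In particular X_f has zero mean curvature if and only if f is harmonic. -/
open Matrix Complex

/-- The Lorentzian pairing on Herm(2), the polarization of X ↦ -det X. -/
noncomputable def mform (X Y : Matrix (Fin 2) (Fin 2) ℂ) : ℂ :=
  (1 / 2) * ((X * Y).trace - X.trace * Y.trace)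

/-- The graph surface in the light cone determined by `f`. -/
noncomputable def graphX (f : ℝ → ℝ → ℝ) (u v : ℝ) : Matrix (Fin 2) (Fin 2) ℂ :=
  (Real.exp (f u v) : ℂ) •
    !![(u : ℂ) ^ 2 + (v : ℂ) ^ 2, (u : ℂ) + I * v; (u : ℂ) - I * v, 1]

/-- Entrywise partial derivative in the first variable. -/
noncomputable def pdU (X : ℝ → ℝ → Matrix (Fin 2) (Fin 2) ℂ) (u v : ℝ) :
    Matrix (Fin 2) (Fin 2) ℂ :=
  Matrix.of fun i j => deriv (fun t => X t v i j) u

/-- Entrywise partial derivative in the second variable. -/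
noncomputable def pdV (X : ℝ → ℝ → Matrix (Fin 2) (Fin 2) ℂ) (u v : ℝ) :
    Matrix (Fin 2) (Fin 2) ℂ :=
  Matrix.of fun i j => deriv (fun t => X u t i j) v

lemma hasDerivAt_ofReal (t : ℝ) : HasDerivAt (fun s : ℝ => (s : ℂ)) 1 t := by
  simpa using (hasDerivAt_id t).ofReal_comp

lemma expMul {φ : ℝ → ℝ} {c : ℝ → ℂ} {p : ℝ} {c' : ℂ} {t : ℝ}
    (hφ : HasDerivAt φ p t) (hc : HasDerivAt c c' t) :
    HasDerivAt (fun s => (Real.exp (φ s) : ℂ) * c s)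
      ((Real.exp (φ t) : ℂ) * ((p : ℂ) * c t + c')) t := by
  have h1 : HasDerivAt (fun s => (Real.exp (φ s) : ℂ)) ((Real.exp (φ t) * p : ℝ) : ℂ) t :=
    (hφ.exp).ofReal_comp
  have h2 := h1.mul hc
  refine h2.congr_deriv ?_
  push_cast
  ring

lemma deriv_expMul {φ : ℝ → ℝ} {c : ℝ → ℂ} {p : ℝ} {c' : ℂ} {t : ℝ}
    (hφ : HasDerivAt φ p t) (hc : HasDerivAt c c' t) :
    deriv (fun s => (Real.exp (φ s) : ℂ) * c s) t
      = (Real.exp (φ t) : ℂ) * ((p : ℂ) * c t + c') :=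
  (expMul hφ hc).deriv

lemma deriv2_expMul {φ : ℝ → ℝ} {V : Set ℝ} (hV : IsOpen V) {u : ℝ} (hu : u ∈ V)
    {φd : ℝ → ℝ} {φdd : ℝ} (hφ1 : ∀ t ∈ V, HasDerivAt φ (φd t) t) (hφ2 : HasDerivAt φd φdd u)
    {c cd : ℝ → ℂ} {cdd : ℂ} (hc : ∀ t, HasDerivAt c (cd t) t) (hcd : HasDerivAt cd cdd u) :
    deriv (fun t => deriv (fun s => (Real.exp (φ s) : ℂ) * c s) t) u
      = (Real.exp (φ u) : ℂ) *
          (((φdd : ℂ) + (φd u : ℂ) ^ 2) * c u + 2 * (φd u : ℂ) * cd u + cdd) := by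
  have hev : (fun t => deriv (fun s => (Real.exp (φ s) : ℂ) * c s) t) =ᶠ[nhds u]
      (fun t => (Real.exp (φ t) : ℂ) * ((φd t : ℂ) * c t + cd t)) := by
    filter_upwards [hV.mem_nhds hu] with t ht
    exact (expMul (hφ1 t ht) (hc t)).deriv
  rw [hev.deriv_eq]
  have hin : HasDerivAt (fun t => (φd t : ℂ) * c t + cd t)
      ((φdd : ℂ) * c u + (φd u : ℂ) * cd u + cdd) u := by
    have h1 := (hφ2.ofReal_comp).mul (hc u)
    exact h1.add hcd
  rw [(expMul (hφ1 u hu) hin).deriv]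
  ring

-- polynomial entry derivatives
lemma hd_c00u (v t : ℝ) : HasDerivAt (fun s : ℝ => ((s:ℂ)^2 + (v:ℂ)^2)) (2*(t:ℂ)) t := by
  have h := ((hasDerivAt_ofReal t).mul (hasDerivAt_ofReal t)).add_const ((v:ℂ)^2)
  have he : (fun s : ℝ => ((s:ℂ)^2 + (v:ℂ)^2)) = fun s : ℝ => (s:ℂ)*(s:ℂ) + (v:ℂ)^2 := by
    funext s; ring
  rw [he]; refine h.congr_deriv ?_; ring

lemma hd_c01u (v t : ℝ) : HasDerivAt (fun s : ℝ => ((s:ℂ) + I*(v:ℂ))) 1 t :=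
  (hasDerivAt_ofReal t).add_const _

lemma hd_c10u (v t : ℝ) : HasDerivAt (fun s : ℝ => ((s:ℂ) - I*(v:ℂ))) 1 t :=
  (hasDerivAt_ofReal t).sub_const _

lemma hd_c00v (u t : ℝ) : HasDerivAt (fun s : ℝ => ((u:ℂ)^2 + (s:ℂ)^2)) (2*(t:ℂ)) t := by
  have h := ((hasDerivAt_ofReal t).mul (hasDerivAt_ofReal t)).const_add ((u:ℂ)^2)
  have he : (fun s : ℝ => ((u:ℂ)^2 + (s:ℂ)^2)) = fun s : ℝ => (u:ℂ)^2 + (s:ℂ)*(s:ℂ) := by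
    funext s; ring
  rw [he]; refine h.congr_deriv ?_; ring

lemma hd_c01v (u t : ℝ) : HasDerivAt (fun s : ℝ => ((u:ℂ) + I*(s:ℂ))) I t := by
  have := ((hasDerivAt_ofReal t).const_mul I).const_add ((u:ℂ))
  simpa using this

lemma hd_c10v (u t : ℝ) : HasDerivAt (fun s : ℝ => ((u:ℂ) - I*(s:ℂ))) (-I) t := by
  have := ((hasDerivAt_ofReal t).const_mul I).const_sub ((u:ℂ))
  simpa using this

lemma hd_2t (u : ℝ) : HasDerivAt (fun t : ℝ => 2*(t:ℂ)) 2 u := by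
  have := (hasDerivAt_ofReal u).const_mul (2:ℂ)
  simpa using this



lemma pdU_graphX_eq (f : ℝ → ℝ → ℝ) {v t : ℝ} {P : ℝ}
    (hp : HasDerivAt (fun s => f s v) P t) :
    pdU (graphX f) t v =
      !![(Real.exp (f t v) : ℂ) * ((P:ℂ)*((t:ℂ)^2+(v:ℂ)^2) + 2*t),
         (Real.exp (f t v) : ℂ) * ((P:ℂ)*((t:ℂ)+I*v) + 1);
         (Real.exp (f t v) : ℂ) * ((P:ℂ)*((t:ℂ)-I*v) + 1),
         (Real.exp (f t v) : ℂ) * (P:ℂ)] := by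
  have e00 : (fun s : ℝ => graphX f s v 0 0)
      = fun s => (Real.exp (f s v):ℂ) * ((s:ℂ)^2+(v:ℂ)^2) := by funext s; simp [graphX]
  have e01 : (fun s : ℝ => graphX f s v 0 1)
      = fun s => (Real.exp (f s v):ℂ) * ((s:ℂ)+I*v) := by funext s; simp [graphX]
  have e10 : (fun s : ℝ => graphX f s v 1 0)
      = fun s => (Real.exp (f s v):ℂ) * ((s:ℂ)-I*v) := by funext s; simp [graphX]
  have e11 : (fun s : ℝ => graphX f s v 1 1)
      = fun s => (Real.exp (f s v):ℂ) * 1 := by funext s; simp [graphX]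
  ext i j
  fin_cases i <;> fin_cases j <;>
    simp only [pdU, Matrix.of_apply, Fin.zero_eta, Fin.mk_one, Fin.isValue,
      Matrix.cons_val', Matrix.cons_val_zero, Matrix.cons_val_one, Matrix.head_cons,
      Matrix.empty_val', Matrix.cons_val_fin_one, Matrix.head_fin_const]
  · rw [e00, deriv_expMul hp (hd_c00u v t)]
  · rw [e01, deriv_expMul hp (hd_c01u v t)]
  · rw [e10, deriv_expMul hp (hd_c10u v t)]
  · rw [e11, deriv_expMul hp (hasDerivAt_const t (1:ℂ))]; ring

lemma pdV_graphX_eq (f : ℝ → ℝ → ℝ) {u t : ℝ} {Q : ℝ}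
    (hq : HasDerivAt (fun s => f u s) Q t) :
    pdV (graphX f) u t =
      !![(Real.exp (f u t) : ℂ) * ((Q:ℂ)*((u:ℂ)^2+(t:ℂ)^2) + 2*t),
         (Real.exp (f u t) : ℂ) * ((Q:ℂ)*((u:ℂ)+I*t) + I);
         (Real.exp (f u t) : ℂ) * ((Q:ℂ)*((u:ℂ)-I*t) - I),
         (Real.exp (f u t) : ℂ) * (Q:ℂ)] := by
  have e00 : (fun s : ℝ => graphX f u s 0 0)
      = fun s => (Real.exp (f u s):ℂ) * ((u:ℂ)^2+(s:ℂ)^2) := by funext s; simp [graphX]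
  have e01 : (fun s : ℝ => graphX f u s 0 1)
      = fun s => (Real.exp (f u s):ℂ) * ((u:ℂ)+I*s) := by funext s; simp [graphX]
  have e10 : (fun s : ℝ => graphX f u s 1 0)
      = fun s => (Real.exp (f u s):ℂ) * ((u:ℂ)-I*s) := by funext s; simp [graphX]
  have e11 : (fun s : ℝ => graphX f u s 1 1)
      = fun s => (Real.exp (f u s):ℂ) * 1 := by funext s; simp [graphX]
  ext i j
  fin_cases i <;> fin_cases j <;>
    simp only [pdV, Matrix.of_apply, Fin.zero_eta, Fin.mk_one, Fin.isValue,
      Matrix.cons_val', Matrix.cons_val_zero, Matrix.cons_val_one, Matrix.head_cons,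
      Matrix.empty_val', Matrix.cons_val_fin_one, Matrix.head_fin_const]
  · rw [e00, deriv_expMul hq (hd_c00v u t)]
  · rw [e01, deriv_expMul hq (hd_c01v u t)]
  · rw [e10, deriv_expMul hq (hd_c10v u t)]; ring
  · rw [e11, deriv_expMul hq (hasDerivAt_const t (1:ℂ))]; ring


lemma pdUU_graphX_eq (f : ℝ → ℝ → ℝ) {v u : ℝ} {V : Set ℝ} (hV : IsOpen V) (hu : u ∈ V)
    (hp1 : ∀ t ∈ V, HasDerivAt (fun s => f s v) (deriv (fun s => f s v) t) t)
    {F2 : ℝ} (hp2 : HasDerivAt (deriv (fun s => f s v)) F2 u) :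
    pdU (pdU (graphX f)) u v =
      !![(Real.exp (f u v) : ℂ) *
            (((F2:ℂ) + ((deriv (fun s => f s v) u : ℝ):ℂ)^2)*((u:ℂ)^2+(v:ℂ)^2)
              + 4*((deriv (fun s => f s v) u : ℝ):ℂ)*(u:ℂ) + 2),
         (Real.exp (f u v) : ℂ) *
            (((F2:ℂ) + ((deriv (fun s => f s v) u : ℝ):ℂ)^2)*((u:ℂ)+I*v)
              + 2*((deriv (fun s => f s v) u : ℝ):ℂ));
         (Real.exp (f u v) : ℂ) *
            (((F2:ℂ) + ((deriv (fun s => f s v) u : ℝ):ℂ)^2)*((u:ℂ)-I*v)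
              + 2*((deriv (fun s => f s v) u : ℝ):ℂ)),
         (Real.exp (f u v) : ℂ) *
            ((F2:ℂ) + ((deriv (fun s => f s v) u : ℝ):ℂ)^2)] := by
  have e00 : (fun s : ℝ => graphX f s v 0 0)
      = fun s => (Real.exp (f s v):ℂ) * ((s:ℂ)^2+(v:ℂ)^2) := by funext s; simp [graphX]
  have e01 : (fun s : ℝ => graphX f s v 0 1)
      = fun s => (Real.exp (f s v):ℂ) * ((s:ℂ)+I*v) := by funext s; simp [graphX]
  have e10 : (fun s : ℝ => graphX f s v 1 0)
      = fun s => (Real.exp (f s v):ℂ) * ((s:ℂ)-I*v) := by funext s; simp [graphX]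
  have e11 : (fun s : ℝ => graphX f s v 1 1)
      = fun s => (Real.exp (f s v):ℂ) * 1 := by funext s; simp [graphX]
  ext i j
  fin_cases i <;> fin_cases j <;>
    simp only [pdU, Matrix.of_apply, Fin.zero_eta, Fin.mk_one, Fin.isValue,
      Matrix.cons_val', Matrix.cons_val_zero, Matrix.cons_val_one, Matrix.head_cons,
      Matrix.empty_val', Matrix.cons_val_fin_one, Matrix.head_fin_const]
  · rw [e00, deriv2_expMul hV hu hp1 hp2 (fun t => hd_c00u v t) (hd_2t u)]; ring
  · rw [e01, deriv2_expMul hV hu hp1 hp2 (cd := fun _ => (1:ℂ))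
        (fun t => hd_c01u v t) (hasDerivAt_const u _)]; ring
  · rw [e10, deriv2_expMul hV hu hp1 hp2 (cd := fun _ => (1:ℂ))
        (fun t => hd_c10u v t) (hasDerivAt_const u _)]; ring
  · rw [e11, deriv2_expMul hV hu hp1 hp2 (cd := fun _ => (0:ℂ))
        (fun t => hasDerivAt_const t (1:ℂ)) (hasDerivAt_const u _)]; ring

lemma pdVV_graphX_eq (f : ℝ → ℝ → ℝ) {u v : ℝ} {V : Set ℝ} (hV : IsOpen V) (hv : v ∈ V)
    (hq1 : ∀ t ∈ V, HasDerivAt (fun s => f u s) (deriv (fun s => f u s) t) t)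
    {G2 : ℝ} (hq2 : HasDerivAt (deriv (fun s => f u s)) G2 v) :
    pdV (pdV (graphX f)) u v =
      !![(Real.exp (f u v) : ℂ) *
            (((G2:ℂ) + ((deriv (fun s => f u s) v : ℝ):ℂ)^2)*((u:ℂ)^2+(v:ℂ)^2)
              + 4*((deriv (fun s => f u s) v : ℝ):ℂ)*(v:ℂ) + 2),
         (Real.exp (f u v) : ℂ) *
            (((G2:ℂ) + ((deriv (fun s => f u s) v : ℝ):ℂ)^2)*((u:ℂ)+I*v)
              + 2*((deriv (fun s => f u s) v : ℝ):ℂ)*I);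
         (Real.exp (f u v) : ℂ) *
            (((G2:ℂ) + ((deriv (fun s => f u s) v : ℝ):ℂ)^2)*((u:ℂ)-I*v)
              - 2*((deriv (fun s => f u s) v : ℝ):ℂ)*I),
         (Real.exp (f u v) : ℂ) *
            ((G2:ℂ) + ((deriv (fun s => f u s) v : ℝ):ℂ)^2)] := by
  have e00 : (fun s : ℝ => graphX f u s 0 0)
      = fun s => (Real.exp (f u s):ℂ) * ((u:ℂ)^2+(s:ℂ)^2) := by funext s; simp [graphX]
  have e01 : (fun s : ℝ => graphX f u s 0 1)
      = fun s => (Real.exp (f u s):ℂ) * ((u:ℂ)+I*s) := by funext s; simp [graphX]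
  have e10 : (fun s : ℝ => graphX f u s 1 0)
      = fun s => (Real.exp (f u s):ℂ) * ((u:ℂ)-I*s) := by funext s; simp [graphX]
  have e11 : (fun s : ℝ => graphX f u s 1 1)
      = fun s => (Real.exp (f u s):ℂ) * 1 := by funext s; simp [graphX]
  ext i j
  fin_cases i <;> fin_cases j <;>
    simp only [pdV, Matrix.of_apply, Fin.zero_eta, Fin.mk_one, Fin.isValue,
      Matrix.cons_val', Matrix.cons_val_zero, Matrix.cons_val_one, Matrix.head_cons,
      Matrix.empty_val', Matrix.cons_val_fin_one, Matrix.head_fin_const]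
  · rw [e00, deriv2_expMul hV hv hq1 hq2 (fun t => hd_c00v u t) (hd_2t v)]; ring
  · rw [e01, deriv2_expMul hV hv hq1 hq2 (cd := fun _ => I)
        (fun t => hd_c01v u t) (hasDerivAt_const v _)]; ring
  · rw [e10, deriv2_expMul hV hv hq1 hq2 (cd := fun _ => -I)
        (fun t => hd_c10v u t) (hasDerivAt_const v _)]; ring
  · rw [e11, deriv2_expMul hV hv hq1 hq2 (cd := fun _ => (0:ℂ))
        (fun t => hasDerivAt_const t (1:ℂ)) (hasDerivAt_const v _)]; ring


lemma mform_apply (X Y : Matrix (Fin 2) (Fin 2) ℂ) :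
    mform X Y = (1/2) * ((X 0 0 * Y 0 0 + X 0 1 * Y 1 0 + X 1 0 * Y 0 1 + X 1 1 * Y 1 1)
      - (X 0 0 + X 1 1) * (Y 0 0 + Y 1 1)) := by
  simp only [mform, Matrix.trace_fin_two, Matrix.mul_apply, Fin.sum_univ_two]
  ring

lemma graphX_eq (f : ℝ → ℝ → ℝ) (u v : ℝ) :
    graphX f u v =
      !![(Real.exp (f u v):ℂ) * ((u:ℂ)^2+(v:ℂ)^2),
         (Real.exp (f u v):ℂ) * ((u:ℂ)+I*v);
         (Real.exp (f u v):ℂ) * ((u:ℂ)-I*v),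
         (Real.exp (f u v):ℂ) * 1] := by
  ext i j
  fin_cases i <;> fin_cases j <;> simp [graphX]


theorem mean_curvature_of_graph (U : Set (ℝ × ℝ)) (hU : IsOpen U)
    (f : ℝ → ℝ → ℝ) (hf : ContDiffOn ℝ (⊤ : ℕ∞) (fun p : ℝ × ℝ => f p.1 p.2) U)
    (u v : ℝ) (hmem : (u, v) ∈ U)
    (G : Matrix (Fin 2) (Fin 2) ℂ) (hG : G.IsHermitian)
    (hGG : mform G G = 0)
    (hGu : mform G (pdU (graphX f) u v) = 0)
    (hGv : mform G (pdV (graphX f) u v) = 0)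
    (hGX : mform G (graphX f u v) = 1) :
    let fuu := deriv (fun t => deriv (fun s => f s v) t) u
    let fvv := deriv (fun t => deriv (fun s => f u s) t) v
    let g : Matrix (Fin 2) (Fin 2) ℂ :=
      !![mform (pdU (graphX f) u v) (pdU (graphX f) u v),
         mform (pdU (graphX f) u v) (pdV (graphX f) u v);
         mform (pdV (graphX f) u v) (pdU (graphX f) u v),
         mform (pdV (graphX f) u v) (pdV (graphX f) u v)]
    let A : Matrix (Fin 2) (Fin 2) ℂ :=
      !![mform G (pdU (pdU (graphX f)) u v), mform G (pdV (pdU (graphX f)) u v);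
         mform G (pdU (pdV (graphX f)) u v), mform G (pdV (pdV (graphX f)) u v)]
    (1 / 2) * (g⁻¹ * A).trace =
        (1 / 2) * Real.exp (-2 * f u v) * (fuu + fvv) ∧
      ((1 / 2) * (g⁻¹ * A).trace = 0 ↔ fuu + fvv = 0) := by
  intro fuu fvv g A
  have hVu : IsOpen {t : ℝ | (t, v) ∈ U} := hU.preimage (continuous_id.prodMk continuous_const)
  have hVv : IsOpen {t : ℝ | (u, t) ∈ U} := hU.preimage (continuous_const.prodMk continuous_id)
  have hmu : u ∈ {t : ℝ | (t, v) ∈ U} := hmem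
  have hmv : v ∈ {t : ℝ | (u, t) ∈ U} := hmem
  have hcu : ContDiffOn ℝ (⊤ : ℕ∞) (fun t : ℝ => f t v) {t : ℝ | (t, v) ∈ U} :=
    hf.comp ((contDiff_id.prodMk contDiff_const).contDiffOn) (fun t ht => ht)
  have hcv : ContDiffOn ℝ (⊤ : ℕ∞) (fun t : ℝ => f u t) {t : ℝ | (u, t) ∈ U} :=
    hf.comp ((contDiff_const.prodMk contDiff_id).contDiffOn) (fun t ht => ht)
  have hp1 : ∀ t ∈ {t : ℝ | (t, v) ∈ U},
      HasDerivAt (fun s => f s v) (deriv (fun s => f s v) t) t := fun t ht =>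
    ((hcu.differentiableOn (by simp)).differentiableAt (hVu.mem_nhds ht)).hasDerivAt
  have hq1 : ∀ t ∈ {t : ℝ | (u, t) ∈ U},
      HasDerivAt (fun s => f u s) (deriv (fun s => f u s) t) t := fun t ht =>
    ((hcv.differentiableOn (by simp)).differentiableAt (hVv.mem_nhds ht)).hasDerivAt
  have hp2 : HasDerivAt (deriv (fun s => f s v)) fuu u := by
    have h1 : ContDiffOn ℝ 1 (deriv (fun s => f s v)) {t : ℝ | (t, v) ∈ U} :=
      hcu.deriv_of_isOpen hVu (WithTop.coe_le_coe.mpr le_top)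
    exact ((h1.differentiableOn one_ne_zero).differentiableAt (hVu.mem_nhds hmu)).hasDerivAt
  have hq2 : HasDerivAt (deriv (fun s => f u s)) fvv v := by
    have h1 : ContDiffOn ℝ 1 (deriv (fun s => f u s)) {t : ℝ | (u, t) ∈ U} :=
      hcv.deriv_of_isOpen hVv (WithTop.coe_le_coe.mpr le_top)
    exact ((h1.differentiableOn one_ne_zero).differentiableAt (hVv.mem_nhds hmv)).hasDerivAt
  have hXu := pdU_graphX_eq f (hp1 u hmu)
  have hXv := pdV_graphX_eq f (hq1 v hmv)
  have hXuu := pdUU_graphX_eq f hVu hmu hp1 hp2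
  have hXvv := pdVV_graphX_eq f hVv hmv hq1 hq2
  have hE : (Real.exp (f u v) : ℂ) ≠ 0 := Complex.ofReal_ne_zero.mpr (Real.exp_ne_zero _)
  have hE2 : (Real.exp (f u v) : ℂ)^2 ≠ 0 := pow_ne_zero _ hE
  -- expand the hypotheses on G into scalar equations
  rw [hXu, mform_apply] at hGu
  rw [hXv, mform_apply] at hGv
  rw [graphX_eq, mform_apply] at hGX
  rw [mform_apply] at hGG
  simp only [Matrix.of_apply, Matrix.cons_val', Matrix.cons_val_zero, Matrix.cons_val_one, Matrix.head_cons,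
    Matrix.empty_val', Matrix.cons_val_fin_one, Matrix.head_fin_const] at hGu
  simp only [Matrix.of_apply, Matrix.cons_val', Matrix.cons_val_zero, Matrix.cons_val_one, Matrix.head_cons,
    Matrix.empty_val', Matrix.cons_val_fin_one, Matrix.head_fin_const] at hGv
  simp only [Matrix.of_apply, Matrix.cons_val', Matrix.cons_val_zero, Matrix.cons_val_one, Matrix.head_cons,
    Matrix.empty_val', Matrix.cons_val_fin_one, Matrix.head_fin_const] at hGX
  -- scalar consequences
  have hS : (Real.exp (f u v):ℂ) * (G 0 1 * ((u:ℂ)-I*v) + G 1 0 * ((u:ℂ)+I*v)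
      - G 0 0 - G 1 1 * ((u:ℂ)^2+(v:ℂ)^2)) = 2 := by
    linear_combination 2 * hGX
  have hT : (Real.exp (f u v):ℂ) * (G 0 1 + G 1 0 - 2*(u:ℂ)*G 1 1)
      = -2*((deriv (fun s => f s v) u : ℝ):ℂ) := by
    linear_combination 2 * hGu - ((deriv (fun s => f s v) u : ℝ):ℂ) * hS
  have hW : (Real.exp (f u v):ℂ) * (I*(G 1 0 - G 0 1) - 2*(v:ℂ)*G 1 1)
      = -2*((deriv (fun s => f u s) v : ℝ):ℂ) := by
    linear_combination 2 * hGv - ((deriv (fun s => f u s) v : ℝ):ℂ) * hS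
  have hdet : G 0 1 * G 1 0 - G 0 0 * G 1 1 = 0 := by linear_combination hGG
  have hd : 2*(Real.exp (f u v):ℂ)*(G 1 1)
      = -(((deriv (fun s => f s v) u : ℝ):ℂ)^2 + ((deriv (fun s => f u s) v : ℝ):ℂ)^2) := by
    linear_combination
      (-(1:ℂ)/4) * ((Real.exp (f u v):ℂ)*(G 0 1 + G 1 0 - 2*(u:ℂ)*G 1 1)
          - 2*((deriv (fun s => f s v) u : ℝ):ℂ)) * hT
      + (-(1:ℂ)/4) * ((Real.exp (f u v):ℂ)*(I*(G 1 0 - G 0 1) - 2*(v:ℂ)*G 1 1)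
          - 2*((deriv (fun s => f u s) v : ℝ):ℂ)) * hW
      + (-(G 1 1)*(Real.exp (f u v):ℂ)) * hS
      + (Real.exp (f u v):ℂ)^2 * hdet
      + ((Real.exp (f u v):ℂ)^2 * (G 0 1 - G 1 0)^2 / 4) * Complex.I_sq
  -- the key sum
  have hsum : mform G (pdU (pdU (graphX f)) u v) + mform G (pdV (pdV (graphX f)) u v)
      = (fuu:ℂ) + (fvv:ℂ) := by
    rw [hXuu, hXvv, mform_apply, mform_apply]
    simp only [Matrix.of_apply, Matrix.cons_val', Matrix.cons_val_zero, Matrix.cons_val_one, Matrix.head_cons,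
      Matrix.empty_val', Matrix.cons_val_fin_one, Matrix.head_fin_const]
    linear_combination
      (((fuu:ℂ) + ((deriv (fun s => f s v) u : ℝ):ℂ)^2)/2) * hS
      + (((fvv:ℂ) + ((deriv (fun s => f u s) v : ℝ):ℂ)^2)/2) * hS
      + ((deriv (fun s => f s v) u : ℝ):ℂ) * hT
      + ((deriv (fun s => f u s) v : ℝ):ℂ) * hW
      - hd
  -- the metric
  have hg00 : mform (pdU (graphX f) u v) (pdU (graphX f) u v) = (Real.exp (f u v):ℂ)^2 := by
    rw [hXu, mform_apply]
    simp only [Matrix.of_apply, Matrix.cons_val', Matrix.cons_val_zero, Matrix.cons_val_one, Matrix.head_cons,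
      Matrix.empty_val', Matrix.cons_val_fin_one, Matrix.head_fin_const]
    linear_combination (-(Real.exp (f u v):ℂ)^2 * ((deriv (fun s => f s v) u : ℝ):ℂ)^2 * (v:ℂ)^2)
      * Complex.I_sq
  have hg11 : mform (pdV (graphX f) u v) (pdV (graphX f) u v) = (Real.exp (f u v):ℂ)^2 := by
    rw [hXv, mform_apply]
    simp only [Matrix.of_apply, Matrix.cons_val', Matrix.cons_val_zero, Matrix.cons_val_one, Matrix.head_cons,
      Matrix.empty_val', Matrix.cons_val_fin_one, Matrix.head_fin_const]
    linear_combination (-(Real.exp (f u v):ℂ)^2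
      * (((deriv (fun s => f u s) v : ℝ):ℂ)*(v:ℂ)+1)^2) * Complex.I_sq
  have hg01 : mform (pdU (graphX f) u v) (pdV (graphX f) u v) = 0 := by
    rw [hXu, hXv, mform_apply]
    simp only [Matrix.of_apply, Matrix.cons_val', Matrix.cons_val_zero, Matrix.cons_val_one, Matrix.head_cons,
      Matrix.empty_val', Matrix.cons_val_fin_one, Matrix.head_fin_const]
    linear_combination ((Real.exp (f u v):ℂ)^2 *
      (-((deriv (fun s => f s v) u : ℝ):ℂ)*((deriv (fun s => f u s) v : ℝ):ℂ)*(v:ℂ)^2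
        - ((deriv (fun s => f s v) u : ℝ):ℂ)*(v:ℂ))) * Complex.I_sq
  have hg10 : mform (pdV (graphX f) u v) (pdU (graphX f) u v) = 0 := by
    rw [hXu, hXv, mform_apply]
    simp only [Matrix.of_apply, Matrix.cons_val', Matrix.cons_val_zero, Matrix.cons_val_one, Matrix.head_cons,
      Matrix.empty_val', Matrix.cons_val_fin_one, Matrix.head_fin_const]
    linear_combination ((Real.exp (f u v):ℂ)^2 *
      (-((deriv (fun s => f s v) u : ℝ):ℂ)*((deriv (fun s => f u s) v : ℝ):ℂ)*(v:ℂ)^2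
        - ((deriv (fun s => f s v) u : ℝ):ℂ)*(v:ℂ))) * Complex.I_sq
  have hgdef : g = !![mform (pdU (graphX f) u v) (pdU (graphX f) u v),
         mform (pdU (graphX f) u v) (pdV (graphX f) u v);
         mform (pdV (graphX f) u v) (pdU (graphX f) u v),
         mform (pdV (graphX f) u v) (pdV (graphX f) u v)] := rfl
  have hAdef : A = !![mform G (pdU (pdU (graphX f)) u v), mform G (pdV (pdU (graphX f)) u v);
         mform G (pdU (pdV (graphX f)) u v), mform G (pdV (pdV (graphX f)) u v)] := rfl
  have hg : g = !![(Real.exp (f u v):ℂ)^2, 0; 0, (Real.exp (f u v):ℂ)^2] := by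
    rw [hgdef, hg00, hg01, hg10, hg11]
  have hginv : g⁻¹ = !![((Real.exp (f u v):ℂ)^2)⁻¹, 0; 0, ((Real.exp (f u v):ℂ)^2)⁻¹] := by
    rw [hg]
    refine Matrix.inv_eq_right_inv ?_
    rw [Matrix.mul_fin_two, Matrix.one_fin_two]
    ext i j
    fin_cases i <;> fin_cases j <;>
      simp only [Matrix.of_apply, Matrix.cons_val', Matrix.cons_val_zero, Matrix.cons_val_one,
        Matrix.head_cons, Matrix.empty_val', Matrix.cons_val_fin_one, Matrix.head_fin_const,
        mul_zero, zero_mul, add_zero, zero_add] <;>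
      field_simp
  have htr : (g⁻¹ * A).trace = ((Real.exp (f u v):ℂ)^2)⁻¹ *
      (mform G (pdU (pdU (graphX f)) u v) + mform G (pdV (pdV (graphX f)) u v)) := by
    rw [hginv, hAdef, Matrix.mul_fin_two, Matrix.trace_fin_two]
    simp only [Matrix.of_apply, Matrix.cons_val', Matrix.cons_val_zero, Matrix.cons_val_one, Matrix.head_cons,
      Matrix.empty_val', Matrix.cons_val_fin_one, Matrix.head_fin_const]
    ring
  have hexp : ((Real.exp (-2 * f u v) : ℝ) : ℂ) = ((Real.exp (f u v):ℂ)^2)⁻¹ := by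
    rw [show (-2 : ℝ) * f u v = -(f u v + f u v) by ring, Real.exp_neg, Real.exp_add]
    push_cast
    rw [sq]
  have heq : (1 / 2) * (g⁻¹ * A).trace
      = (1 / 2) * (Real.exp (-2 * f u v) : ℂ) * ((fuu:ℂ) + (fvv:ℂ)) := by
    rw [htr, hsum, hexp]
    ring
  refine ⟨heq, ?_⟩
  rw [heq]
  have hEn : ((Real.exp (-2 * f u v) : ℝ) : ℂ) ≠ 0 :=
    Complex.ofReal_ne_zero.mpr (Real.exp_ne_zero _)
  constructor
  · intro h
    have h2 : ((fuu:ℂ) + (fvv:ℂ)) = 0 := by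
      rcases mul_eq_zero.mp h with h' | h'
      · rcases mul_eq_zero.mp h' with h'' | h''
        · norm_num at h''
        · exact absurd h'' hEn
      · exact h'
    exact_mod_cast h2
  · intro h
    have h2 : ((fuu:ℂ) + (fvv:ℂ)) = 0 := by exact_mod_cast congrArg (fun x : ℝ => (x:ℂ)) h
    rw [h2]
    ring
end

section
/- Let φ(z) = e^{icz}·(z, 1)ᵀ for c ∈ R and z = u+iv. Then φ(z)φ(z)* = e^{-2cv}·[[|z|², z],[z̄, 1]] = e^{-2cv}·P(iv)·δ(u)·P(iv)*, where P(iv) = [[1,iv],[0,1]] and δ(u) = [[u²,u],[u,1]]. Consequently the parabolic catenoid C^P_c(u,v) = φ(u+iv)φ(u+iv)* satisfies C^P_c(e^{2cv}u, v) = p_c(v) δ(u) p_c(v)* with p_c(v) = P(iv)·diag(e^{cv}, e^{-cv}), so the parabolic catenoid is a ruled surface (foliated by images of the geodesic δ under isometries). -/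
open Matrix Complex

/-- The lift of the parabolic catenoid to ℂ². -/
noncomputable def phiP (c : ℝ) (z : ℂ) : Fin 2 → ℂ :=
  ![Complex.exp (I * c * z) * z, Complex.exp (I * c * z)]

/-- The parabolic catenoid as a rank-one Hermitian matrix. -/
noncomputable def catP (c : ℝ) (u v : ℝ) : Matrix (Fin 2) (Fin 2) ℂ :=
  Matrix.vecMulVec (phiP c (u + I * v)) (fun i => star (phiP c (u + I * v) i))

theorem parabolic_catenoid_ruled (c : ℝ) (u v : ℝ) :
    catP c u v =
      (Real.exp (-2 * c * v) : ℂ) •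
        (!![1, I * v; 0, 1] * !![(u : ℂ) ^ 2, (u : ℂ); (u : ℂ), 1] *
          (!![1, I * v; 0, 1])ᴴ) ∧
    catP c (Real.exp (2 * c * v) * u) v =
      (!![1, I * v; 0, 1] * !![(Real.exp (c * v) : ℂ), 0; 0, (Real.exp (-(c * v)) : ℂ)]) *
        !![(u : ℂ) ^ 2, (u : ℂ); (u : ℂ), 1] *
      (!![1, I * v; 0, 1] * !![(Real.exp (c * v) : ℂ), 0; 0, (Real.exp (-(c * v)) : ℂ)])ᴴ := by
  constructor
  · have hE : Complex.exp (I * c * (u + I * v)) *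
        (starRingEnd ℂ) (Complex.exp (I * c * (u + I * v)))
        = Complex.exp (-(2 * c * v)) := by
      rw [← Complex.exp_conj, ← Complex.exp_add]
      congr 1
      simp [Complex.ext_iff]
      ring
    ext i j
    fin_cases i <;> fin_cases j <;>
      simp [catP, phiP, Matrix.mul_apply, Fin.sum_univ_two, Matrix.vecMulVec_apply,
        Matrix.conjTranspose_apply, Matrix.vecMul, dotProduct]
    · linear_combination ((u:ℂ)+I*v)*((u:ℂ)-I*v)*hE
    · linear_combination ((u:ℂ)+I*v)*hE
    · linear_combination ((u:ℂ)-I*v)*hE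
    · linear_combination hE
  · set w : ℝ := Real.exp (2 * c * v) * u with hw
    have hwc : (w : ℂ) = (Real.exp (2 * c * v) : ℂ) * u := by push_cast [hw]; ring
    have hE2 : Complex.exp (I * c * (w + I * v)) *
        (starRingEnd ℂ) (Complex.exp (I * c * (w + I * v)))
        = (Real.exp (-2 * c * v) : ℂ) := by
      rw [← Complex.exp_conj, ← Complex.exp_add, Complex.ofReal_exp]
      congr 1
      simp [Complex.ext_iff]
      ring
    have h1 : (Real.exp (2 * c * v) : ℂ) * (Real.exp (-2 * c * v) : ℂ) = 1 := by
      rw [← Complex.ofReal_mul, ← Real.exp_add]; norm_num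
    have h2 : (Real.exp (c * v) : ℂ) * (Real.exp (-(c * v)) : ℂ) = 1 := by
      rw [← Complex.ofReal_mul, ← Real.exp_add]; norm_num
    have h3 : (Real.exp (2 * c * v) : ℂ) = (Real.exp (c * v) : ℂ) ^ 2 := by
      rw [← Complex.ofReal_pow, ← Real.exp_nat_mul]; norm_num; ring_nf
    have h4 : (Real.exp (-2 * c * v) : ℂ) = (Real.exp (-(c * v)) : ℂ) ^ 2 := by
      rw [← Complex.ofReal_pow, ← Real.exp_nat_mul]; norm_num; ring_nf
    ext i j
    fin_cases i <;> fin_cases j <;>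
      simp [catP, phiP, Matrix.mul_apply, Fin.sum_univ_two, Matrix.vecMulVec_apply,
        Matrix.conjTranspose_apply, Matrix.vecMul, dotProduct, -Complex.ofReal_exp]
    · linear_combination ((w:ℂ)+I*v)*((w:ℂ)-I*v)*hE2
        + (Real.exp (-2*c*v):ℂ)*((w:ℂ)+(Real.exp (2*c*v):ℂ)*u)*hwc
        + (Real.exp (2*c*v):ℂ)*(u:ℂ)^2*h1 + (u:ℂ)^2*h3 - (I*v)^2*h4
    · linear_combination ((w:ℂ)+I*v)*hE2 + (Real.exp (-2*c*v):ℂ)*hwc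
        + (u:ℂ)*h1 - (u:ℂ)*h2 + I*v*h4
    · linear_combination ((w:ℂ)-I*v)*hE2 + (Real.exp (-2*c*v):ℂ)*hwc
        + (u:ℂ)*h1 - (u:ℂ)*h2 - I*v*h4
    · linear_combination hE2 + h4
end
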